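/- arXiv:2301.03084 — 2 statements merged into one kernel-verified Lean document; each statement's English description precedes it below -/
import Mathlib

section
/- Let p_r satisfy p_0 = 0 and p_r = α·p_{r-1} + (k+1)/2^k + γ·(r/2^r) where α = 1 - 1/2^k, γ = (1/2)(1 - 1/2^{k-2}), and k ≥ 2 is an integer. Then p_r = (k+1)·(1-α^r) + δ_r where 0 ≤ δ_r < α^r. -/
/-!
Writing `α = 1 - ε` with `ε = 2⁻ᵏ`, so that `γ = 1/2 - 2ε`, the deviation
`δ_r = p_r - (k+1)(1 - α^r)` satisfies `δ_0 = 0` and `δ_{r+1} = α δ_r + γ (r+1)/2^{r+1}`.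
Nonnegativity is immediate. For the upper bound one carries the stronger invariant
`δ_r ≤ α^r - (r+2)/2^{r+1}`: the slack `(r+2)/2^{r+1}` shrinks under the recurrence by
`α (r+2)/2^{r+1} - γ (r+1)/2^{r+1} - (r+3)/2^{r+2} = ε r / 2^{r+1} ≥ 0`.
-/

lemma one_div_two_pow_le_quarter {k : ℕ} (hk : 2 ≤ k) : (1 : ℝ) / 2 ^ k ≤ 1 / 4 := by
  have h4 : (2 : ℝ) ^ 2 ≤ 2 ^ k := pow_le_pow_right₀ (by norm_num) hk
  rw [div_le_div_iff₀ (by positivity) (by norm_num)]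
  linarith

lemma half_mul_one_sub_one_div_two_pow_sub_two {k : ℕ} (hk : 2 ≤ k) :
    (1 / 2 : ℝ) * (1 - 1 / 2 ^ (k - 2)) = 1 / 2 - 2 * (1 / 2 ^ k) := by
  obtain ⟨j, rfl⟩ := Nat.exists_eq_add_of_le hk
  rw [Nat.add_sub_cancel_left, pow_add]
  field_simp

section Deviation

variable {ε : ℝ} {δ : ℕ → ℝ}

lemma slack_step (hε : 0 ≤ ε) (n : ℕ) :
    (1 - ε) * ((1 - ε) ^ n - ((n : ℝ) + 2) / 2 ^ (n + 1)) +
        (1 / 2 - 2 * ε) * (((n : ℝ) + 1) / 2 ^ (n + 1))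
      ≤ (1 - ε) ^ (n + 1) - ((n : ℝ) + 3) / 2 ^ (n + 2) := by
  have hgap : (1 - ε) ^ (n + 1) - ((n : ℝ) + 3) / 2 ^ (n + 2) -
      ((1 - ε) * ((1 - ε) ^ n - ((n : ℝ) + 2) / 2 ^ (n + 1)) +
        (1 / 2 - 2 * ε) * (((n : ℝ) + 1) / 2 ^ (n + 1))) = ε * n / 2 ^ (n + 1) := by
    field_simp
    ring
  have : 0 ≤ ε * n / 2 ^ (n + 1) := by positivity
  linarith

variable (hε : 0 ≤ ε) (hε' : ε ≤ 1 / 4) (hδ0 : δ 0 = 0)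
  (hδ : ∀ n : ℕ, δ (n + 1) = (1 - ε) * δ n + (1 / 2 - 2 * ε) * (((n : ℝ) + 1) / 2 ^ (n + 1)))
include hε hε' hδ0 hδ

lemma deviation_bounds (n : ℕ) :
    0 ≤ δ n ∧ δ n ≤ (1 - ε) ^ n - ((n : ℝ) + 2) / 2 ^ (n + 1) := by
  induction n with
  | zero => simp [hδ0]
  | succ n ih =>
    have hα : 0 ≤ 1 - ε := by linarith
    have hγ : 0 ≤ (1 / 2 - 2 * ε) * (((n : ℝ) + 1) / 2 ^ (n + 1)) :=
      mul_nonneg (by linarith) (by positivity)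
    rw [hδ n]
    refine ⟨add_nonneg (mul_nonneg hα ih.1) hγ, ?_⟩
    calc (1 - ε) * δ n + (1 / 2 - 2 * ε) * (((n : ℝ) + 1) / 2 ^ (n + 1))
        ≤ (1 - ε) * ((1 - ε) ^ n - ((n : ℝ) + 2) / 2 ^ (n + 1)) +
            (1 / 2 - 2 * ε) * (((n : ℝ) + 1) / 2 ^ (n + 1)) := by
          gcongr
          exact ih.2
      _ ≤ (1 - ε) ^ (n + 1) - ((n : ℝ) + 3) / 2 ^ (n + 2) := slack_step hε n
      _ = (1 - ε) ^ (n + 1) - (((n + 1 : ℕ) : ℝ) + 2) / 2 ^ (n + 1 + 1) := by push_cast; ring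

lemma deviation_lt_pow (n : ℕ) : δ n < (1 - ε) ^ n := by
  have : 0 < ((n : ℝ) + 2) / 2 ^ (n + 1) := by positivity
  linarith [(deviation_bounds hε hε' hδ0 hδ n).2]

end Deviation

theorem stmt_10 (k : ℕ) (hk : 2 ≤ k)
    (α γ : ℝ) (hα : α = 1 - 1 / 2 ^ k) (hγ : γ = (1/2) * (1 - 1 / 2 ^ (k - 2)))
    (p : ℕ → ℝ) (h0 : p 0 = 0)
    (hrec : ∀ r : ℕ, 1 ≤ r → p r = α * p (r - 1) + ((k : ℝ) + 1) / 2 ^ k + γ * (r / 2 ^ r)) :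
    ∀ r : ℕ, 0 ≤ p r - ((k : ℝ) + 1) * (1 - α ^ r) ∧
      p r - ((k : ℝ) + 1) * (1 - α ^ r) < α ^ r := by
  rw [half_mul_one_sub_one_div_two_pow_sub_two hk] at hγ
  subst hα hγ
  set ε : ℝ := 1 / 2 ^ k
  have hε : 0 ≤ ε := by positivity
  have hε' : ε ≤ 1 / 4 := one_div_two_pow_le_quarter hk
  set δ : ℕ → ℝ := fun r ↦ p r - ((k : ℝ) + 1) * (1 - (1 - ε) ^ r)
  have hδ0 : δ 0 = 0 := by simp [δ, h0]
  have hδ (n : ℕ) :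
      δ (n + 1) = (1 - ε) * δ n + (1 / 2 - 2 * ε) * (((n : ℝ) + 1) / 2 ^ (n + 1)) := by
    simp only [δ]
    rw [hrec (n + 1) (Nat.le_add_left 1 n), Nat.add_sub_cancel]
    push_cast
    ring
  exact fun r ↦ ⟨(deviation_bounds hε hε' hδ0 hδ r).1, deviation_lt_pow hε hε' hδ0 hδ r⟩
end

section
/- In a mixed-stable tree, the access frequency f(x) of any queried leaf x at depth d(x) satisfies 1/3^{d(x)} ≤ f(x) ≤ 1/3^{d(x)/2}. If the tree is strongly-stable, then f(x) = 1/2^{d(x)} exactly. -/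
/-- The list of per-edge frequency factors along a root-to-leaf path in a
mixed-stable tree: each strongly-stable node contributes a factor `1/2`, and
each weakly-stable node contributes either a factor `1/3`, or a factor `2/3`
necessarily followed by a factor `1/2` (through its strongly-stable favored
child). -/
inductive StablePath : List ℝ → Prop
  | nil : StablePath []
  | strong (l : List ℝ) : StablePath l → StablePath ((1/2) :: l)
  | weakShort (l : List ℝ) : StablePath l → StablePath ((1/3) :: l)
  | weakLong (l : List ℝ) : StablePath l → StablePath ((2/3) :: (1/2) :: l)

lemma aux_bounds (l : List ℝ) (h : StablePath l) :
    (1 / 3 : ℝ) ^ l.length ≤ l.prod ∧ l.prod ≤ (Real.sqrt (1/3)) ^ l.length := by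
  have ha : Real.sqrt (1/3) ^ 2 = (1/3 : ℝ) := Real.sq_sqrt (by norm_num)
  have ha1 : (1/3 : ℝ) ≤ Real.sqrt (1/3) := by
    nlinarith [Real.sqrt_nonneg (1/3 : ℝ), Real.sq_sqrt (show (0:ℝ) ≤ 1/3 by norm_num)]
  have ha2 : (1/2 : ℝ) ≤ Real.sqrt (1/3) := by
    nlinarith [Real.sqrt_nonneg (1/3 : ℝ), Real.sq_sqrt (show (0:ℝ) ≤ 1/3 by norm_num)]
  induction h with
  | nil => simp
  | strong l hl ih =>
    obtain ⟨ih1, ih2⟩ := ih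
    have hp : (0:ℝ) ≤ l.prod := le_trans (by positivity) ih1
    constructor
    · simp only [List.prod_cons, List.length_cons, pow_succ]
      nlinarith [pow_pos (show (0:ℝ) < 1/3 by norm_num) l.length]
    · simp only [List.prod_cons, List.length_cons, pow_succ]
      nlinarith [pow_nonneg (Real.sqrt_nonneg (1/3:ℝ)) l.length]
  | weakShort l hl ih =>
    obtain ⟨ih1, ih2⟩ := ih
    have hp : (0:ℝ) ≤ l.prod := le_trans (by positivity) ih1
    constructor
    · simp only [List.prod_cons, List.length_cons, pow_succ]
      nlinarith [pow_pos (show (0:ℝ) < 1/3 by norm_num) l.length]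
    · simp only [List.prod_cons, List.length_cons, pow_succ]
      nlinarith [pow_nonneg (Real.sqrt_nonneg (1/3:ℝ)) l.length]
  | weakLong l hl ih =>
    obtain ⟨ih1, ih2⟩ := ih
    have hp : (0:ℝ) ≤ l.prod := le_trans (by positivity) ih1
    constructor
    · simp only [List.prod_cons, List.length_cons, pow_succ]
      nlinarith [pow_pos (show (0:ℝ) < 1/3 by norm_num) l.length]
    · simp only [List.prod_cons, List.length_cons, pow_succ]
      have hs : (0:ℝ) ≤ Real.sqrt (1/3) := Real.sqrt_nonneg _
      have hpow : (0:ℝ) ≤ Real.sqrt (1/3) ^ l.length := pow_nonneg hs _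
      nlinarith

/-- The access frequency `f x = l.prod` of a leaf at depth `d x = l.length` in a
mixed-stable tree satisfies `1/3^(d x) ≤ f x ≤ 1/3^(d x / 2)`; in a
strongly-stable tree (all factors `1/2`), `f x = 1/2^(d x)` exactly. -/
theorem stmt_13 :
    (∀ l : List ℝ, StablePath l →
      (1 / 3 : ℝ) ^ l.length ≤ l.prod ∧
      l.prod ≤ (1 / 3 : ℝ) ^ ((l.length : ℝ) / 2)) ∧
    (∀ l : List ℝ, (∀ y ∈ l, y = (1/2 : ℝ)) → l.prod = (1 / 2 : ℝ) ^ l.length) := by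
  constructor
  · intro l h
    obtain ⟨h1, h2⟩ := aux_bounds l h
    refine ⟨h1, ?_⟩
    have : (1/3 : ℝ) ^ ((l.length : ℝ) / 2) = (Real.sqrt (1/3)) ^ l.length := by
      rw [Real.sqrt_eq_rpow, ← Real.rpow_natCast ((1/3:ℝ) ^ ((1:ℝ)/2)) l.length,
        ← Real.rpow_mul (by norm_num)]
      ring_nf
    rw [this]; exact h2
  · intro l h
    induction l with
    | nil => simp
    | cons a t ih =>
      simp only [List.prod_cons, List.length_cons, pow_succ]
      rw [h a List.mem_cons_self, ih (fun y hy => h y (List.mem_cons_of_mem a hy))]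
      ring
end
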